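/- arXiv:1406.4585 — 8 statements merged into one kernel-verified Lean document; each statement's English description precedes it below -/
import Mathlib

section
/- If y : ℝ → ℝ^m is a solution of the Lotka-Volterra system ẏ_i = y_i(-∑_{j<i} y_j + ∑_{j>i} y_j), then the sum u_k(t) = y_1(t)+⋯+y_k(t) satisfies u̇_k = u_k(H - u_k), where H = y_1+⋯+y_m. -/
/-!
Summing the equations over `i ≤ k`, the interaction terms `y_i y_j` with `i, j ≤ k` cancel in
pairs by antisymmetry of the interaction matrix, leaving `∑_{i ≤ k < j} y_i y_j = u_k (H - u_k)`.
-/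

open Finset

lemma sum_Ioc_eq_sum_Icc_one_sub {G : Type*} [AddCommGroup G] (f : ℕ → G) {i m : ℕ}
    (him : i ≤ m) : ∑ j ∈ Ioc i m, f j = ∑ j ∈ Icc 1 m, f j - ∑ j ∈ Icc 1 i, f j := by
  have hIcc (n : ℕ) : Icc 1 n = Ioc 0 n := Icc_add_one_left_eq_Ioc 0 n
  rw [eq_sub_iff_add_eq', hIcc, hIcc, sum_Ioc_consecutive f (Nat.zero_le i) him]

lemma sum_Icc_mul_neg_sum_Ico_add_sum_Ioc {R : Type*} [CommRing R] (a : ℕ → R) {k m : ℕ}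
    (hkm : k ≤ m) :
    ∑ i ∈ Icc 1 k, a i * (-(∑ j ∈ Ico 1 i, a j) + ∑ j ∈ Ioc i m, a j) =
      (∑ j ∈ Icc 1 k, a j) * ((∑ j ∈ Icc 1 m, a j) - ∑ j ∈ Icc 1 k, a j) := by
  induction k with
  | zero => simp
  | succ k ih =>
    rw [sum_Icc_succ_top (by omega), ih (by omega), Ico_add_one_right_eq_Icc,
      sum_Ioc_eq_sum_Icc_one_sub a hkm, sum_Icc_succ_top (by omega)]
    ring

/-- for a solution `y` of the Lotka-Volterra system (1-based indices 1..m),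
the partial sum `u_k = y_1 + ⋯ + y_k` satisfies `u̇_k = u_k (H - u_k)` with `H = y_1 + ⋯ + y_m`. -/
theorem lv_partial_sum_ode (m : ℕ) (y : ℝ → ℕ → ℝ)
    (hy : ∀ i ∈ Finset.Icc 1 m, ∀ t : ℝ, HasDerivAt (fun s => y s i)
      (y t i * (-(∑ j ∈ Finset.Ico 1 i, y t j) + ∑ j ∈ Finset.Ioc i m, y t j)) t)
    (k : ℕ) (hk : k ∈ Finset.Icc 1 m) (t : ℝ) :
    HasDerivAt (fun s => ∑ j ∈ Finset.Icc 1 k, y s j)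
      ((∑ j ∈ Finset.Icc 1 k, y t j) *
        ((∑ j ∈ Finset.Icc 1 m, y t j) - ∑ j ∈ Finset.Icc 1 k, y t j)) t := by
  have hkm : k ≤ m := (mem_Icc.mp hk).2
  rw [← sum_Icc_mul_neg_sum_Ico_add_sum_Ioc (y t) hkm]
  exact HasDerivAt.fun_sum fun i hi => hy i (Icc_subset_Icc_right hkm hi) t
end

section
/- For m odd and 1 ≤ k ≤ (m+1)/2, the rational function F_k(y) = (y_1 + y_2 + ⋯ + y_{2k-1}) · (y_{2k+1} y_{2k+3} ⋯ y_m)/(y_{2k} y_{2k+2} ⋯ y_{m-1}) is a constant of motion of the Lotka-Volterra system: along any solution with nonvanishing denominator, d/dt F_k(y(t)) = 0. -/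
/-!
Write `S = y₁ + ⋯ + y_{2k-1}`, `T = y_{2k} + ⋯ + y_m` and `P` for the product of the ratios.
The interactions among `y₁, …, y_{2k-1}` are antisymmetric and cancel in `S'`, so `S' = S T`.
Each ratio `y_{2s+1}/y_{2s}` has logarithmic derivative `-(y_{2s} + y_{2s+1})`, and these pairs
tile `{2k, …, m}` because `m` is odd, so `P' = -P T`. Hence `(S P)' = S T P - S P T = 0`.
-/

open Finset

variable {R : Type*} [CommRing R]

theorem Finset.sum_mul_sum_filter_lt_comm {ι : Type*} [LinearOrder ι] (s : Finset ι)
    (f : ι → R) :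
    ∑ i ∈ s, f i * ∑ j ∈ s with i < j, f j = ∑ i ∈ s, f i * ∑ j ∈ s with j < i, f j := by
  simp_rw [mul_sum, sum_filter]
  rw [sum_comm]
  exact sum_congr rfl fun i _ => sum_congr rfl fun j _ => if_congr Iff.rfl (mul_comm _ _) rfl

theorem Finset.sum_Ico_two_mul (f : ℕ → R) {a b : ℕ} (hab : a ≤ b) :
    ∑ s ∈ Ico a b, (f (2 * s) + f (2 * s + 1)) = ∑ j ∈ Ico (2 * a) (2 * b), f j := by
  induction b, hab using Nat.le_induction with
  | base => simp
  | succ b hab ih =>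
    rw [sum_Ico_succ_top hab, ih, show 2 * (b + 1) = 2 * b + 1 + 1 by ring,
      sum_Ico_succ_top (by omega), sum_Ico_succ_top (by omega), add_assoc]

def lvField (m : ℕ) (x : ℕ → R) (i : ℕ) : R :=
  x i * (-(∑ j ∈ Ico 1 i, x j) + ∑ j ∈ Ioc i m, x j)

theorem sum_lvField_Icc_one (x : ℕ → R) {N m : ℕ} (hNm : N ≤ m) :
    ∑ l ∈ Icc 1 N, lvField m x l = (∑ l ∈ Icc 1 N, x l) * ∑ j ∈ Ioc N m, x j := by
  have split : ∀ l ∈ Icc 1 N, lvField m x l =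
      (x l * ∑ j ∈ Icc 1 N with l < j, x j - x l * ∑ j ∈ Icc 1 N with j < l, x j)
        + x l * ∑ j ∈ Ioc N m, x j := by
    intro l hl
    rw [mem_Icc] at hl
    have upper : {j ∈ Icc 1 N | l < j} = Ioc l N := by
      ext j; simp only [mem_filter, mem_Icc, mem_Ioc]; omega
    have lower : {j ∈ Icc 1 N | j < l} = Ico 1 l := by
      ext j; simp only [mem_filter, mem_Icc, mem_Ico]; omega
    rw [lvField, upper, lower, ← sum_Ioc_consecutive _ hl.2 hNm]
    ring
  rw [sum_congr rfl split, sum_add_distrib, sum_sub_distrib, sum_mul_sum_filter_lt_comm, sub_self,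
    zero_add, sum_mul]

theorem lvField_succ_mul_sub (x : ℕ → R) {m i : ℕ} (hi : 1 ≤ i) (him : i < m) :
    lvField m x (i + 1) * x i - x (i + 1) * lvField m x i
      = -(x i + x (i + 1)) * (x (i + 1) * x i) := by
  rw [lvField, lvField, sum_Ico_succ_top hi, ← sum_Ioc_consecutive _ (Nat.le_succ i) him,
    Nat.Ioc_succ_singleton, sum_singleton]
  ring

theorem hasDerivAt_finset_prod_of_logDeriv {𝕜 ι : Type*} [NontriviallyNormedField 𝕜]
    [DecidableEq ι] {s : Finset ι} {g : ι → 𝕜 → 𝕜} {h : ι → 𝕜} {t : 𝕜}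
    (hg : ∀ i ∈ s, HasDerivAt (g i) (g i t * h i) t) :
    HasDerivAt (fun τ => ∏ i ∈ s, g i τ) ((∏ i ∈ s, g i t) * ∑ i ∈ s, h i) t := by
  refine (HasDerivAt.fun_finsetProd hg).congr_deriv ?_
  rw [mul_sum]
  refine sum_congr rfl fun i hi => ?_
  rw [smul_eq_mul, ← mul_prod_erase s _ hi]
  ring

theorem hasDerivAt_lv_ratio {m i : ℕ} {y : ℝ → ℕ → ℝ} {t : ℝ}
    (hyi : HasDerivAt (fun τ => y τ i) (lvField m (y t) i) t)
    (hyi' : HasDerivAt (fun τ => y τ (i + 1)) (lvField m (y t) (i + 1)) t)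
    (hi : 1 ≤ i) (him : i < m) (hz : y t i ≠ 0) :
    HasDerivAt (fun τ => y τ (i + 1) / y τ i)
      (y t (i + 1) / y t i * -(y t i + y t (i + 1))) t := by
  refine (hyi'.div hyi hz).congr_deriv ?_
  rw [lvField_succ_mul_sub _ hi him]
  field_simp

/-- for `m` odd and `1 ≤ k ≤ (m+1)/2`, the function
`F_k = (y_1 + ⋯ + y_{2k-1}) ∏_{s=k}^{(m-1)/2} y_{2s+1}/y_{2s}`
is a constant of motion of the Lotka-Volterra system. -/
theorem lv_Fk_conserved_odd (m : ℕ) (hm : Odd m) (k : ℕ) (hk1 : 1 ≤ k) (hk2 : k ≤ (m + 1) / 2)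
    (y : ℝ → ℕ → ℝ)
    (hy : ∀ i ∈ Finset.Icc 1 m, ∀ t : ℝ, HasDerivAt (fun s => y s i)
      (y t i * (-(∑ j ∈ Finset.Ico 1 i, y t j) + ∑ j ∈ Finset.Ioc i m, y t j)) t)
    (hnz : ∀ t : ℝ, ∀ s ∈ Finset.Icc k ((m - 1) / 2), y t (2 * s) ≠ 0) (t : ℝ) :
    HasDerivAt (fun τ => (∑ l ∈ Finset.Icc 1 (2 * k - 1), y τ l) *
      ∏ s ∈ Finset.Icc k ((m - 1) / 2), y τ (2 * s + 1) / y τ (2 * s)) 0 t := by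
  obtain ⟨c, rfl⟩ := hm
  rw [show (2 * c + 1 - 1) / 2 = c by omega] at hnz ⊢
  have hy' : ∀ i, 1 ≤ i → i ≤ 2 * c + 1 →
      HasDerivAt (fun τ => y τ i) (lvField (2 * c + 1) (y t) i) t :=
    fun i h1 h2 => hy i (mem_Icc.2 ⟨h1, h2⟩) t
  set S := ∑ l ∈ Icc 1 (2 * k - 1), y t l
  set T := ∑ j ∈ Ioc (2 * k - 1) (2 * c + 1), y t j
  set P := ∏ s ∈ Icc k c, y t (2 * s + 1) / y t (2 * s)
  have hS : HasDerivAt (fun τ => ∑ l ∈ Icc 1 (2 * k - 1), y τ l) (S * T) t := by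
    rw [← sum_lvField_Icc_one _ (by omega)]
    exact HasDerivAt.fun_sum fun l hl => hy' l (mem_Icc.1 hl).1 (by grind)
  have pairs : ∑ s ∈ Icc k c, -(y t (2 * s) + y t (2 * s + 1)) = -T := by
    have tiles : Ioc (2 * k - 1) (2 * c + 1) = Ico (2 * k) (2 * (c + 1)) := by
      ext j; simp only [mem_Ioc, mem_Ico]; omega
    rw [sum_neg_distrib, ← Ico_add_one_right_eq_Icc, sum_Ico_two_mul _ (by omega), ← tiles]
  have hP : HasDerivAt (fun τ => ∏ s ∈ Icc k c, y τ (2 * s + 1) / y τ (2 * s)) (P * -T) t := by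
    rw [← pairs]
    refine hasDerivAt_finset_prod_of_logDeriv fun s hs => ?_
    have := mem_Icc.1 hs
    exact hasDerivAt_lv_ratio (hy' _ (by omega) (by omega)) (hy' _ (by omega) (by omega))
      (by omega) (by omega) (hnz t s hs)
  exact (hS.mul hP).congr_deriv (by ring)
end

section
/- For m even and 1 ≤ k ≤ m/2, the rational function F_k(y) = (y_1 + ⋯ + y_{2k}) · (y_{2k+2} y_{2k+4} ⋯ y_m)/(y_{2k+1} y_{2k+3} ⋯ y_{m-1}) is a constant of motion of the Lotka-Volterra system on ℝ^m. -/
/-!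
Write `c_i = -(y_1 + ⋯ + y_{i-1}) + (y_{i+1} + ⋯ + y_m)` (`rate m y i`), so that `y_i' = y_i c_i`.
In `∑_{l ≤ 2k} y_l c_l` the products `y_l y_j` with `l, j ≤ 2k` cancel in pairs, leaving
`S' = S R` for `S = y_1 + ⋯ + y_{2k}` and `R = y_{2k+1} + ⋯ + y_m`. Each ratio
`y_{2s}/y_{2s-1}` has logarithmic derivative `c_{2s} - c_{2s-1} = -(y_{2s-1} + y_{2s})`, and
these add up to `-R` over `k < s ≤ m/2`. Hence `F_k' = F_k R - F_k R = 0`.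
-/

open Finset

section LogDeriv

variable {𝕜 : Type*} [NontriviallyNormedField 𝕜] {x : 𝕜}

theorem HasDerivAt.finsetProd_of_logDeriv {ι 𝔸 : Type*} [NormedCommRing 𝔸] [NormedAlgebra 𝕜 𝔸]
    {u : Finset ι} {f : ι → 𝕜 → 𝔸} {a : ι → 𝔸}
    (hf : ∀ i ∈ u, HasDerivAt (f i) (f i x * a i) x) :
    HasDerivAt (∏ i ∈ u, f i ·) ((∏ i ∈ u, f i x) * ∑ i ∈ u, a i) x := by
  classical
  refine (HasDerivAt.fun_finsetProd hf).congr_deriv ?_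
  rw [mul_sum]
  refine sum_congr rfl fun i hi => ?_
  rw [smul_eq_mul, ← mul_prod_erase u _ hi]
  ring

theorem HasDerivAt.div_of_logDeriv {𝕜' : Type*} [NontriviallyNormedField 𝕜'] [NormedAlgebra 𝕜 𝕜']
    {f g : 𝕜 → 𝕜'} {a b : 𝕜'} (hf : HasDerivAt f (f x * a) x) (hg : HasDerivAt g (g x * b) x)
    (hx : g x ≠ 0) : HasDerivAt (fun y => f y / g y) (f x / g x * (a - b)) x := by
  refine (hf.fun_div hg hx).congr_deriv ?_
  field_simp

end LogDeriv

theorem Finset.sum_Icc_two_mul_sub_one_add_two_mul {M : Type*} [AddCommMonoid M] (f : ℕ → M)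
    (a b : ℕ) :
    ∑ s ∈ Icc (a + 1) b, (f (2 * s - 1) + f (2 * s)) = ∑ j ∈ Ioc (2 * a) (2 * b), f j := by
  induction b with
  | zero => simp
  | succ b ih =>
    rcases le_or_gt (a + 1) (b + 1) with h | h
    · rw [sum_Icc_succ_top h, ih, show 2 * (b + 1) = 2 * b + 1 + 1 by ring,
        sum_Ioc_succ_top (by omega), sum_Ioc_succ_top (by omega), Nat.add_sub_cancel, ← add_assoc]
    · rw [Icc_eq_empty (by omega), Ioc_eq_empty (by omega), sum_empty, sum_empty]

namespace LotkaVolterra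

def rate (m : ℕ) (x : ℕ → ℝ) (i : ℕ) : ℝ :=
  -(∑ j ∈ Ico 1 i, x j) + ∑ j ∈ Ioc i m, x j

variable {x : ℕ → ℝ}

theorem sum_mul_rate_self (n : ℕ) : ∑ l ∈ Icc 1 n, x l * rate n x l = 0 := by
  have hswap : ∑ l ∈ Icc 1 n, ∑ j ∈ Ioc l n, x l * x j
      = ∑ j ∈ Icc 1 n, ∑ l ∈ Ico 1 j, x l * x j :=
    sum_comm' fun l j => by simp only [mem_Icc, mem_Ioc, mem_Ico]; omega
  simp only [rate, mul_add, mul_neg, sum_add_distrib, sum_neg_distrib, mul_sum, hswap]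
  rw [neg_add_eq_zero]
  exact sum_congr rfl fun j _ => sum_congr rfl fun l _ => mul_comm _ _

theorem rate_eq_rate_add {n m l : ℕ} (hl : l ≤ n) (hn : n ≤ m) :
    rate m x l = rate n x l + ∑ j ∈ Ioc n m, x j := by
  rw [rate, rate, ← sum_Ioc_consecutive x hl hn]
  ring

theorem sum_mul_rate {n m : ℕ} (hn : n ≤ m) :
    ∑ l ∈ Icc 1 n, x l * rate m x l = (∑ l ∈ Icc 1 n, x l) * ∑ j ∈ Ioc n m, x j := by
  calc ∑ l ∈ Icc 1 n, x l * rate m x l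
      = ∑ l ∈ Icc 1 n, (x l * rate n x l + x l * ∑ j ∈ Ioc n m, x j) :=
        sum_congr rfl fun l hl => by rw [rate_eq_rate_add (mem_Icc.1 hl).2 hn, mul_add]
    _ = (∑ l ∈ Icc 1 n, x l) * ∑ j ∈ Ioc n m, x j := by
        rw [sum_add_distrib, sum_mul_rate_self, zero_add, sum_mul]

theorem rate_succ_sub_rate {m i : ℕ} (hi : 1 ≤ i) (him : i + 1 ≤ m) :
    rate m x (i + 1) - rate m x i = -(x i + x (i + 1)) := by
  rw [rate, rate, sum_Ico_succ_top hi, ← sum_Ioc_consecutive x (Nat.le_succ i) him,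
    Nat.Ioc_succ_singleton, sum_singleton]
  ring

theorem sum_rate_pair_sub {m a b : ℕ} (hb : 2 * b ≤ m) :
    ∑ s ∈ Icc (a + 1) b, (rate m x (2 * s) - rate m x (2 * s - 1))
      = -∑ j ∈ Ioc (2 * a) (2 * b), x j := by
  rw [← Finset.sum_Icc_two_mul_sub_one_add_two_mul, ← sum_neg_distrib]
  refine sum_congr rfl fun s hs => ?_
  obtain ⟨hs1, hs2⟩ := mem_Icc.1 hs
  have h := rate_succ_sub_rate (x := x) (m := m) (i := 2 * s - 1) (by omega) (by omega)
  rwa [Nat.sub_add_cancel (by omega)] at h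

end LotkaVolterra

open LotkaVolterra

theorem lv_Fk_conserved_even_general (m : ℕ) (hm : Even m) (k : ℕ) (hk2 : k ≤ m / 2)
    (y : ℝ → ℕ → ℝ)
    (hy : ∀ i ∈ Finset.Icc 1 m, ∀ t : ℝ, HasDerivAt (fun s => y s i)
      (y t i * (-(∑ j ∈ Finset.Ico 1 i, y t j) + ∑ j ∈ Finset.Ioc i m, y t j)) t)
    (hnz : ∀ t : ℝ, ∀ s ∈ Finset.Icc (k + 1) (m / 2), y t (2 * s - 1) ≠ 0) (t : ℝ) :
    HasDerivAt (fun τ => (∑ l ∈ Finset.Icc 1 (2 * k), y τ l) *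
      ∏ s ∈ Finset.Icc (k + 1) (m / 2), y τ (2 * s) / y τ (2 * s - 1)) 0 t := by
  have hrate : ∀ i ∈ Icc 1 m, HasDerivAt (fun s => y s i) (y t i * rate m (y t) i) t :=
    fun i hi => hy i hi t
  have hm2 : 2 * (m / 2) = m := Nat.two_mul_div_two_of_even hm
  set R := ∑ j ∈ Ioc (2 * k) m, y t j
  have hS : HasDerivAt (fun τ => ∑ l ∈ Icc 1 (2 * k), y τ l)
      ((∑ l ∈ Icc 1 (2 * k), y t l) * R) t := by
    rw [← sum_mul_rate (by omega)]
    exact HasDerivAt.fun_sum fun l hl => hrate l (Icc_subset_Icc_right (by omega) hl)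
  have hP : HasDerivAt (fun τ => ∏ s ∈ Icc (k + 1) (m / 2), y τ (2 * s) / y τ (2 * s - 1))
      ((∏ s ∈ Icc (k + 1) (m / 2), y t (2 * s) / y t (2 * s - 1)) * -R) t := by
    have hsum := sum_rate_pair_sub (x := y t) (a := k) hm2.le
    rw [hm2] at hsum
    rw [← hsum]
    refine HasDerivAt.finsetProd_of_logDeriv fun s hs => ?_
    obtain ⟨hs1, hs2⟩ := mem_Icc.1 hs
    exact (hrate _ (mem_Icc.2 ⟨by omega, by omega⟩)).div_of_logDeriv
      (hrate _ (mem_Icc.2 ⟨by omega, by omega⟩)) (hnz t s hs)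
  exact (hS.mul hP).congr_deriv (by ring)

/-- for `m` even and `1 ≤ k ≤ m/2`, the function
`F_k = (y_1 + ⋯ + y_{2k}) ∏_{s=k+1}^{m/2} y_{2s}/y_{2s-1}`
(i.e. `(y_1+⋯+y_{2k}) (y_{2k+2} ⋯ y_m)/(y_{2k+1} ⋯ y_{m-1})`)
is a constant of motion of the Lotka-Volterra system. -/
theorem lv_Fk_conserved_even (m : ℕ) (hm : Even m) (k : ℕ) (hk1 : 1 ≤ k) (hk2 : k ≤ m / 2)
    (y : ℝ → ℕ → ℝ)
    (hy : ∀ i ∈ Finset.Icc 1 m, ∀ t : ℝ, HasDerivAt (fun s => y s i)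
      (y t i * (-(∑ j ∈ Finset.Ico 1 i, y t j) + ∑ j ∈ Finset.Ioc i m, y t j)) t)
    (hnz : ∀ t : ℝ, ∀ s ∈ Finset.Icc (k + 1) (m / 2), y t (2 * s - 1) ≠ 0) (t : ℝ) :
    HasDerivAt (fun τ => (∑ l ∈ Finset.Icc 1 (2 * k), y τ l) *
      ∏ s ∈ Finset.Icc (k + 1) (m / 2), y τ (2 * s) / y τ (2 * s - 1)) 0 t :=
  lv_Fk_conserved_even_general m hm k hk2 y hy hnz t
end

section
/- If F is a smooth function on ℝ^{m+2} depending only on y_1,…,y_m, then {y_{m+2}/y_{m+1}, F}^q = 0 wherever y_{m+1} ≠ 0, with respect to the quadratic Poisson bracket {y_i,y_j}^q = y_i y_j (i<j). -/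
/-- The quadratic Poisson bracket on ℝ^n. -/
noncomputable def qbracket {n : ℕ} (F G : (Fin n → ℝ) → ℝ) (y : Fin n → ℝ) : ℝ :=
  ∑ i : Fin n, ∑ j ∈ Finset.univ.filter (fun j => i < j),
    y i * y j * (fderiv ℝ F y (Pi.single i 1) * fderiv ℝ G y (Pi.single j 1)
      - fderiv ℝ F y (Pi.single j 1) * fderiv ℝ G y (Pi.single i 1))

/-- Algebraic core: the double sum vanishes. -/
lemma qb_aux (m : ℕ) (y dF : Fin (m + 2) → ℝ) (hy : y ⟨m, (by omega : m + 0 < m + 2)⟩ ≠ 0)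
    (hdF : ∀ j : Fin (m + 2), m ≤ (j : ℕ) → dF j = 0) :
    ∑ i : Fin (m + 2), ∑ j ∈ Finset.univ.filter (fun j => i < j),
      y i * y j *
        ((if (i : ℕ) = m then -(y ⟨m + 1, (by omega : m + 1 + 0 < m + 2)⟩) / (y ⟨m, (by omega : m + 0 < m + 2)⟩) ^ 2
            else if (i : ℕ) = m + 1 then 1 / (y ⟨m, (by omega : m + 0 < m + 2)⟩) else 0) * dF j
          - (if (j : ℕ) = m then -(y ⟨m + 1, (by omega : m + 1 + 0 < m + 2)⟩) / (y ⟨m, (by omega : m + 0 < m + 2)⟩) ^ 2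
            else if (j : ℕ) = m + 1 then 1 / (y ⟨m, (by omega : m + 0 < m + 2)⟩) else 0) * dF i) = 0 := by
  apply Finset.sum_eq_zero
  intro i _
  by_cases him : (i : ℕ) < m
  · have hia : ¬((i : ℕ) = m) := by omega
    have hib : ¬((i : ℕ) = m + 1) := by omega
    rw [if_neg hia, if_neg hib]
    have hsub : ({⟨m, by omega⟩, ⟨m + 1, by omega⟩} : Finset (Fin (m + 2))) ⊆
        Finset.univ.filter (fun j => i < j) := by
      intro j hj
      simp only [Finset.mem_insert, Finset.mem_singleton] at hj
      simp only [Finset.mem_filter, Finset.mem_univ, true_and]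
      rcases hj with rfl | rfl <;> exact Fin.lt_def.mpr (by simp; omega)
    rw [← Finset.sum_subset hsub (by
      intro j _ hjn
      simp only [Finset.mem_insert, Finset.mem_singleton, not_or] at hjn
      have hja : ¬((j : ℕ) = m) := fun h => hjn.1 (Fin.ext h)
      have hjb : ¬((j : ℕ) = m + 1) := fun h => hjn.2 (Fin.ext h)
      rw [if_neg hja, if_neg hjb]; ring)]
    rw [Finset.sum_pair (by simp [Fin.ext_iff] : (⟨m, by omega⟩ : Fin (m + 2)) ≠ ⟨m + 1, by omega⟩)]
    norm_num
    field_simp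
    ring
  · apply Finset.sum_eq_zero
    intro j hj
    have hij : i < j := (Finset.mem_filter.mp hj).2
    have hij' : (i : ℕ) < (j : ℕ) := hij
    rw [hdF i (by omega), hdF j (by omega)]
    ring

/-- if `F` on ℝ^{m+2} depends only on the first m coordinates
`y_1,…,y_m`, then `{y_{m+2}/y_{m+1}, F}^q = 0` wherever `y_{m+1} ≠ 0`. -/
theorem quotient_bracket_vanishes (m : ℕ) (F₀ : (Fin m → ℝ) → ℝ) (hF₀ : ContDiff ℝ (⊤ : ℕ∞) F₀)
    (y : Fin (m + 2) → ℝ) (hy : y ⟨m, by omega⟩ ≠ 0) :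
    qbracket (fun z => z ⟨m + 1, by omega⟩ / z ⟨m, by omega⟩)
      (fun z => F₀ (fun i => z (Fin.castLE (by omega) i))) y = 0 := by
  have hHd : ∀ i : Fin (m + 2),
      fderiv ℝ (fun z : Fin (m + 2) → ℝ => z ⟨m + 1, by omega⟩ / z ⟨m, by omega⟩) y
          (Pi.single i 1)
        = (if (i : ℕ) = m then -(y ⟨m + 1, by omega⟩) / (y ⟨m, by omega⟩) ^ 2
            else if (i : ℕ) = m + 1 then 1 / (y ⟨m, by omega⟩) else 0) := by
    intro i
    have hb := (ContinuousLinearMap.proj (R := ℝ) (φ := fun _ : Fin (m + 2) => ℝ)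
      ⟨m + 1, by omega⟩).hasFDerivAt (x := y)
    have ha := (ContinuousLinearMap.proj (R := ℝ) (φ := fun _ : Fin (m + 2) => ℝ)
      ⟨m, by omega⟩).hasFDerivAt (x := y)
    have hainv := (hasFDerivAt_inv (𝕜 := ℝ) hy).comp y ha
    have h1 := hb.mul hainv
    have heq : (fun z : Fin (m + 2) → ℝ => z ⟨m + 1, by omega⟩ / z ⟨m, by omega⟩)
        = fun z : Fin (m + 2) → ℝ =>
            (⇑(ContinuousLinearMap.proj (R := ℝ) (φ := fun _ : Fin (m + 2) => ℝ)
              (⟨m + 1, by omega⟩ : Fin (m + 2))) z) *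
            ((fun x : ℝ => x⁻¹) ∘ ⇑(ContinuousLinearMap.proj (R := ℝ)
              (φ := fun _ : Fin (m + 2) => ℝ) (⟨m, by omega⟩ : Fin (m + 2)))) z := by
      funext z; simp [div_eq_mul_inv]
    rw [heq]; erw [h1.fderiv]
    simp only [ContinuousLinearMap.add_apply, ContinuousLinearMap.coe_smul', Pi.smul_apply,
      ContinuousLinearMap.coe_comp', Function.comp_apply, ContinuousLinearMap.proj_apply,
      ContinuousLinearMap.smulRight_apply, ContinuousLinearMap.one_apply, smul_eq_mul,
      ContinuousLinearMap.toSpanSingleton_apply,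
      Pi.single_apply, Fin.ext_iff]
    by_cases hA : (i : ℕ) = m
    · rw [if_pos hA.symm, if_neg (by omega : ¬ m + 1 = (i : ℕ)), if_pos hA]
      field_simp
      ring
    · by_cases hB : (i : ℕ) = m + 1
      · rw [if_neg (fun h => hA h.symm), if_pos hB.symm, if_neg hA, if_pos hB]
        field_simp
        ring
      · rw [if_neg (fun h => hA h.symm), if_neg (fun h => hB h.symm), if_neg hA, if_neg hB]
        ring
  have hFd : ∀ j : Fin (m + 2), m ≤ (j : ℕ) →
      fderiv ℝ (fun z : Fin (m + 2) → ℝ => F₀ (fun i => z (Fin.castLE (by omega) i))) y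
        (Pi.single j 1) = 0 := by
    intro j hj
    set L : (Fin (m + 2) → ℝ) →L[ℝ] (Fin m → ℝ) :=
      ContinuousLinearMap.pi (fun i => ContinuousLinearMap.proj (Fin.castLE (by omega) i)) with hL
    have hcomp : (fun z : Fin (m + 2) → ℝ => F₀ (fun i => z (Fin.castLE (by omega) i)))
        = F₀ ∘ ⇑L := rfl
    rw [hcomp, fderiv_comp y ((hF₀.differentiable (by simp)).differentiableAt) L.differentiableAt,
      L.fderiv]
    have hz : L (Pi.single j 1) = 0 := by
      ext i
      simp only [hL, ContinuousLinearMap.pi_apply, ContinuousLinearMap.proj_apply,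
        Pi.single_apply, Pi.zero_apply]
      rw [if_neg]
      intro h
      have h2 : ((Fin.castLE (by omega : m ≤ m + 2) i : Fin (m + 2)) : ℕ) = (j : ℕ) :=
        congrArg Fin.val h
      simp at h2
      omega
    simp only [ContinuousLinearMap.coe_comp', Function.comp_apply, hz, map_zero]
  have step : qbracket (fun z => z ⟨m + 1, by omega⟩ / z ⟨m, by omega⟩)
      (fun z => F₀ (fun i => z (Fin.castLE (by omega) i))) y
      = ∑ i : Fin (m + 2), ∑ j ∈ Finset.univ.filter (fun j => i < j),
        y i * y j *
          ((if (i : ℕ) = m then -(y ⟨m + 1, by omega⟩) / (y ⟨m, by omega⟩) ^ 2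
              else if (i : ℕ) = m + 1 then 1 / (y ⟨m, by omega⟩) else 0) *
            (fun k : Fin (m + 2) => fderiv ℝ
              (fun z : Fin (m + 2) → ℝ => F₀ (fun i => z (Fin.castLE (by omega) i))) y
              (Pi.single k 1)) j
            - (if (j : ℕ) = m then -(y ⟨m + 1, by omega⟩) / (y ⟨m, by omega⟩) ^ 2
              else if (j : ℕ) = m + 1 then 1 / (y ⟨m, by omega⟩) else 0) *
            (fun k : Fin (m + 2) => fderiv ℝ
              (fun z : Fin (m + 2) → ℝ => F₀ (fun i => z (Fin.castLE (by omega) i))) y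
              (Pi.single k 1)) i) := by
    unfold qbracket
    refine Finset.sum_congr rfl fun i _ => Finset.sum_congr rfl fun j _ => ?_
    rw [hHd i, hHd j]
  rw [step]
  exact qb_aux m y _ hy hFd
end

section
/- The Kahan discretization of the Lotka-Volterra system with step 2ε, defined implicitly by ỹ_j − y_j = ε y_j (∑_{k>j} ỹ_k − ∑_{k<j} ỹ_k) + ε ỹ_j (∑_{k>j} y_k − ∑_{k<j} y_k), is explicitly solved by ỹ_j = y_j (1−εH)(1+εH) / ((1−εH+2ε u_{j−1})(1−εH+2ε u_j)), where u_j = y_1+⋯+y_j, u_0 = 0, H = u_m, provided the denominators are nonzero. -/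
/-!
Writing `T_n = ∑_{l ≤ n} ỹ_l` and `u_n = ∑_{l ≤ n} y_l`, the `j`-th implicit equation is exactly
the difference between the cases `n = j` and `n = j - 1` of the bilinear relation
`T_n (1 − εH + 2ε u_n) = u_n (1 + ε T_m)`, so that relation holds for all `n ≤ m`. At `n = m` it
gives `T_m = H`: the scheme conserves `H`. Hence `T_n = u_n (1 + εH) / (1 − εH + 2ε u_n)`, and
`ỹ_j = T_j − T_{j−1}` is the stated product formula.
-/

/-- `u_j = y_1 + ⋯ + y_j` (1-based indexing; `usum y 0 = 0`). -/
noncomputable def usum (y : ℕ → ℝ) (j : ℕ) : ℝ := ∑ l ∈ Finset.Icc 1 j, y l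

open Finset

section PartialSums

variable (y : ℕ → ℝ)

@[simp]
lemma usum_zero : usum y 0 = 0 := by
  simp [usum]

lemma usum_succ (n : ℕ) : usum y (n + 1) = usum y n + y (n + 1) :=
  sum_Icc_succ_top (Nat.le_add_left 1 n) y

lemma sum_Ioc_eq_usum_sub {n m : ℕ} (h : n ≤ m) :
    ∑ k ∈ Ioc n m, y k = usum y m - usum y n := by
  rw [eq_sub_iff_add_eq', usum, usum, show Icc 1 n = Ioc 0 n from Icc_add_one_left_eq_Ioc 0 n,
    show Icc 1 m = Ioc 0 m from Icc_add_one_left_eq_Ioc 0 m]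
  exact sum_Ioc_consecutive y (Nat.zero_le n) h

lemma sum_Ico_one_succ_eq_usum (i : ℕ) : ∑ k ∈ Ico 1 (i + 1), y k = usum y i := by
  rw [Ico_add_one_right_eq_Icc, usum]

end PartialSums

/-- One step of the Kahan discretization, with step `2ε`, of the Lotka–Volterra system
`ẏ_j = y_j (∑_{k>j} y_k − ∑_{k<j} y_k)`, taking `y` to `ty`. -/
def IsKahanLotkaVolterraStep (m : ℕ) (ε : ℝ) (y ty : ℕ → ℝ) : Prop :=
  ∀ j ∈ Icc 1 m,
    ty j - y j = ε * y j * ((∑ k ∈ Ioc j m, ty k) - ∑ k ∈ Ico 1 j, ty k)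
      + ε * ty j * ((∑ k ∈ Ioc j m, y k) - ∑ k ∈ Ico 1 j, y k)

namespace IsKahanLotkaVolterraStep

variable {m : ℕ} {ε : ℝ} {y ty : ℕ → ℝ}

lemma eq_usum (h : IsKahanLotkaVolterraStep m ε y ty) {i : ℕ} (hi : i + 1 ≤ m) :
    ty (i + 1) - y (i + 1) =
      ε * y (i + 1) * (usum ty m - usum ty (i + 1) - usum ty i)
        + ε * ty (i + 1) * (usum y m - usum y (i + 1) - usum y i) := by
  have := h (i + 1) (mem_Icc.2 ⟨Nat.le_add_left 1 i, hi⟩)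
  rw [sum_Ioc_eq_usum_sub ty hi, sum_Ioc_eq_usum_sub y hi, sum_Ico_one_succ_eq_usum,
    sum_Ico_one_succ_eq_usum] at this
  linear_combination this

lemma usum_mul (h : IsKahanLotkaVolterraStep m ε y ty) {n : ℕ} (hn : n ≤ m) :
    usum ty n * (1 - ε * usum y m + 2 * ε * usum y n) = usum y n * (1 + ε * usum ty m) := by
  induction n with
  | zero => simp
  | succ i ih =>
    have step := h.eq_usum hn
    rw [usum_succ ty, usum_succ y] at step ⊢
    linear_combination ih (Nat.le_of_succ_le hn) + step

lemma usum_eq_usum (h : IsKahanLotkaVolterraStep m ε y ty) : usum ty m = usum y m := by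
  linear_combination h.usum_mul le_rfl

lemma usum_eq_div (h : IsKahanLotkaVolterraStep m ε y ty) {n : ℕ} (hn : n ≤ m)
    (hden : 1 - ε * usum y m + 2 * ε * usum y n ≠ 0) :
    usum ty n = usum y n * (1 + ε * usum y m) / (1 - ε * usum y m + 2 * ε * usum y n) := by
  rw [eq_div_iff hden]
  linear_combination h.usum_mul hn + ε * usum y n * h.usum_eq_usum

end IsKahanLotkaVolterraStep

/-- the Kahan discretization of the Lotka-Volterra system with step `2ε`,
given implicitly, is solved explicitly by
`ỹ_j = y_j (1−εH)(1+εH)/((1−εH+2εu_{j−1})(1−εH+2εu_j))`, where `H = u_m`. -/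
theorem kahan_explicit (m : ℕ) (ε : ℝ) (y ty : ℕ → ℝ)
    (hden : ∀ j ≤ m, 1 - ε * usum y m + 2 * ε * usum y j ≠ 0)
    (himp : ∀ j ∈ Finset.Icc 1 m,
      ty j - y j = ε * y j * ((∑ k ∈ Finset.Ioc j m, ty k) - ∑ k ∈ Finset.Ico 1 j, ty k)
        + ε * ty j * ((∑ k ∈ Finset.Ioc j m, y k) - ∑ k ∈ Finset.Ico 1 j, y k)) :
    ∀ j ∈ Finset.Icc 1 m,
      ty j = y j * ((1 - ε * usum y m) * (1 + ε * usum y m)) /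
        ((1 - ε * usum y m + 2 * ε * usum y (j - 1)) * (1 - ε * usum y m + 2 * ε * usum y j)) := by
  have hK : IsKahanLotkaVolterraStep m ε y ty := himp
  intro j hj
  obtain ⟨hj1, hjm⟩ := mem_Icc.1 hj
  obtain ⟨i, rfl⟩ : ∃ i, j = i + 1 := ⟨j - 1, by omega⟩
  have hprev := hden i (by omega)
  have hcur := hden (i + 1) hjm
  have hty : ty (i + 1) = usum ty (i + 1) - usum ty i := by rw [usum_succ]; ring
  rw [hty, hK.usum_eq_div hjm hcur, hK.usum_eq_div (by omega) hprev, Nat.add_sub_cancel,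
    div_sub_div _ _ hcur hprev, usum_succ]
  ring
end

section
/- If ũ_j = u_j (1+εH)/(1−εH+2ε u_j) with H = u_m, then ũ_j − u_j = ε u_j (H − ũ_j) + ε ũ_j (H − u_j), and moreover ũ_m = u_m; in particular H is a constant of motion of the map u ↦ ũ. -/
/-!
The implicit relation `ũ - u = ε u (H - ũ) + ε ũ (H - u)` is linear in `ũ`: it is equivalent to
`ũ (1 - εH + 2εu) = u (1 + εH)`, whose unique solution is the explicit Kahan step. At `u = H`
the coefficient `1 - εH + 2εH` equals `1 + εH`, so the step fixes `H`.
-/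

def kahanStep {K : Type*} [Field K] (ε H x : K) : K :=
  x * (1 + ε * H) / (1 - ε * H + 2 * ε * x)

theorem kahan_implicit_iff {R : Type*} [CommRing R] (ε H x y : R) :
    y - x = ε * x * (H - y) + ε * y * (H - x) ↔
      y * (1 - ε * H + 2 * ε * x) = x * (1 + ε * H) := by
  constructor <;> intro h <;> linear_combination h

variable {K : Type*} [Field K]

theorem kahanStep_mul_den {ε H x : K} (hx : 1 - ε * H + 2 * ε * x ≠ 0) :
    kahanStep ε H x * (1 - ε * H + 2 * ε * x) = x * (1 + ε * H) :=
  div_mul_cancel₀ _ hx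

theorem kahanStep_sub_self {ε H x : K} (hx : 1 - ε * H + 2 * ε * x ≠ 0) :
    kahanStep ε H x - x = ε * x * (H - kahanStep ε H x) + ε * kahanStep ε H x * (H - x) :=
  (kahan_implicit_iff ε H x _).2 (kahanStep_mul_den hx)

theorem kahanStep_self {ε H : K} (hH : 1 + ε * H ≠ 0) : kahanStep ε H H = H := by
  rw [kahanStep, show 1 - ε * H + 2 * ε * H = 1 + ε * H by ring, mul_div_assoc, div_self hH,
    mul_one]

theorem kahan_u_implicit_and_H_preserved_general (m : ℕ) (ε : ℝ) (u : ℕ → ℝ)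
    (hden : ∀ j ≤ m, 1 - ε * u m + 2 * ε * u j ≠ 0) :
    (∀ j ≤ m,
      u j * (1 + ε * u m) / (1 - ε * u m + 2 * ε * u j) - u j
        = ε * u j * (u m - u j * (1 + ε * u m) / (1 - ε * u m + 2 * ε * u j))
          + ε * (u j * (1 + ε * u m) / (1 - ε * u m + 2 * ε * u j)) * (u m - u j))
    ∧ u m * (1 + ε * u m) / (1 - ε * u m + 2 * ε * u m) = u m := by
  have hH : 1 + ε * u m ≠ 0 := by
    simpa only [show 1 - ε * u m + 2 * ε * u m = 1 + ε * u m by ring] using hden m le_rfl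
  exact ⟨fun j hj => kahanStep_sub_self (hden j hj), kahanStep_self hH⟩

/-- if `ũ_j = u_j (1+εH)/(1−εH+2εu_j)` with `H = u_m`, then
`ũ_j − u_j = ε u_j (H − ũ_j) + ε ũ_j (H − u_j)`, and `ũ_m = u_m`;
in particular `H` is a constant of motion of the map `u ↦ ũ`. -/
theorem kahan_u_implicit_and_H_preserved (m : ℕ) (ε : ℝ) (u : ℕ → ℝ)
    (hden : ∀ j ≤ m, 1 - ε * u m + 2 * ε * u j ≠ 0) (h1 : 1 + ε * u m ≠ 0) :
    (∀ j ≤ m,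
      u j * (1 + ε * u m) / (1 - ε * u m + 2 * ε * u j) - u j
        = ε * u j * (u m - u j * (1 + ε * u m) / (1 - ε * u m + 2 * ε * u j))
          + ε * (u j * (1 + ε * u m) / (1 - ε * u m + 2 * ε * u j)) * (u m - u j))
    ∧ u m * (1 + ε * u m) / (1 - ε * u m + 2 * ε * u m) = u m :=
  kahan_u_implicit_and_H_preserved_general m ε u hden
end

section
/- The Kahan map is a Poisson map for the quadratic bracket in u-coordinates: if ũ_j = u_j(1+εH)/(1−εH+2ε u_j) with H = u_m, then for i < j, ∑ over the bracket relations gives {ũ_i, ũ_j} = ũ_i(ũ_j − ũ_i), where {u_i, u_j} = u_i(u_j − u_i) for i < j. -/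
/-!
Each `ũ_k` depends only on `u_k` and `H = u_m`, so its differential is a combination of `du_k`
and `du_m`. By bilinearity and antisymmetry the bracket `{ũ_i, ũ_j}` therefore only involves the
structure constants `{u_i, u_j}`, `{u_i, u_m}` and `{u_j, u_m}`, and what remains is a rational
identity in `u_i, u_j, H`. For `a ≤ b` the constant is `u_a (u_b - u_a)` even when `a = b`, so the
case `j = m` needs no separate treatment.
-/

/-- The Poisson bracket in the coordinates `u`, determined by `{u_a, u_b} = u_a (u_b − u_a)`
for `a < b`: `{F,G}(u) = ∑_{a<b} u_a (u_b − u_a)(∂_a F ∂_b G − ∂_b F ∂_a G)`. -/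
noncomputable def ubracket {n : ℕ} (F G : (Fin n → ℝ) → ℝ) (u : Fin n → ℝ) : ℝ :=
  ∑ a : Fin n, ∑ b ∈ Finset.univ.filter (fun b => a < b),
    u a * (u b - u a) * (fderiv ℝ F u (Pi.single a 1) * fderiv ℝ G u (Pi.single b 1)
      - fderiv ℝ F u (Pi.single b 1) * fderiv ℝ G u (Pi.single a 1))

theorem kahan_bracket_identity (ε x y H : ℝ) (hx : 1 - ε * H + 2 * ε * x ≠ 0)
    (hy : 1 - ε * H + 2 * ε * y ≠ 0) :
    (1 + ε * H) * (1 - ε * H) / (1 - ε * H + 2 * ε * x) ^ 2 *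
        ((1 + ε * H) * (1 - ε * H) / (1 - ε * H + 2 * ε * y) ^ 2) * (x * (y - x))
      + (1 + ε * H) * (1 - ε * H) / (1 - ε * H + 2 * ε * x) ^ 2 *
        (2 * ε * y * (1 + ε * y) / (1 - ε * H + 2 * ε * y) ^ 2) * (x * (H - x))
      - 2 * ε * x * (1 + ε * x) / (1 - ε * H + 2 * ε * x) ^ 2 *
        ((1 + ε * H) * (1 - ε * H) / (1 - ε * H + 2 * ε * y) ^ 2) * (y * (H - y))
      = x * (1 + ε * H) / (1 - ε * H + 2 * ε * x) *
        (y * (1 + ε * H) / (1 - ε * H + 2 * ε * y) - x * (1 + ε * H) / (1 - ε * H + 2 * ε * x)) := by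
  -- `field_simp` only clears the denominators once they are atoms
  generalize hDx : 1 - ε * H + 2 * ε * x = Dx at *
  generalize hDy : 1 - ε * H + 2 * ε * y = Dy at *
  field_simp
  subst hDx hDy
  ring

section

open Finset ContinuousLinearMap

variable {n : ℕ}

noncomputable def poissonBivector (u : Fin n → ℝ) :
    ((Fin n → ℝ) →L[ℝ] ℝ) →ₗ[ℝ] ((Fin n → ℝ) →L[ℝ] ℝ) →ₗ[ℝ] ℝ :=
  LinearMap.mk₂ ℝ
    (fun L M => ∑ a, ∑ b ∈ univ.filter (a < ·), u a * (u b - u a) *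
      (L (Pi.single a 1) * M (Pi.single b 1) - L (Pi.single b 1) * M (Pi.single a 1)))
    (fun L L' M => by simp only [add_apply, ← sum_add_distrib]; congr! 2; ring)
    (fun c L M => by simp only [smul_apply, smul_eq_mul, mul_sum]; congr! 2; ring)
    (fun L M M' => by simp only [add_apply, ← sum_add_distrib]; congr! 2; ring)
    (fun c L M => by simp only [smul_apply, smul_eq_mul, mul_sum]; congr! 2; ring)

theorem ubracket_eq_poissonBivector (F G : (Fin n → ℝ) → ℝ) (u : Fin n → ℝ) :
    ubracket F G u = poissonBivector u (fderiv ℝ F u) (fderiv ℝ G u) := rfl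

theorem poissonBivector_swap (u : Fin n → ℝ) (L M : (Fin n → ℝ) →L[ℝ] ℝ) :
    poissonBivector u M L = -poissonBivector u L M := by
  simp only [poissonBivector, LinearMap.mk₂_apply, ← sum_neg_distrib]
  congr! 2
  ring

theorem poissonBivector_proj_proj_of_le (u : Fin n → ℝ) {a b : Fin n} (hab : a ≤ b) :
    poissonBivector u (proj a) (proj b) = u a * (u b - u a) := by
  rcases hab.lt_or_eq with hlt | rfl
  · rw [poissonBivector, LinearMap.mk₂_apply, sum_eq_single a, sum_eq_single b]
    · simp [hlt.ne, hlt.ne']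
    · intro c _ hcb
      simp [Pi.single_apply, hcb, hlt.ne]
    · simp [hlt]
    · intro c _ hca
      refine sum_eq_zero fun d hd => ?_
      simp only [mem_filter, mem_univ, true_and] at hd
      simp only [proj_apply, Pi.single_apply]
      grind
    · simp
  · rw [sub_self, mul_zero, poissonBivector, LinearMap.mk₂_apply]
    refine sum_eq_zero fun c _ => sum_eq_zero fun d hd => ?_
    simp only [mem_filter, mem_univ, true_and] at hd
    simp only [proj_apply, Pi.single_apply]
    grind

noncomputable def kahanCoord (ε : ℝ) (h k : Fin n) (v : Fin n → ℝ) : ℝ :=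
  v k * (1 + ε * v h) / (1 - ε * v h + 2 * ε * v k)

theorem hasFDerivAt_kahanCoord (ε : ℝ) (h k : Fin n) {u : Fin n → ℝ}
    (hk : 1 - ε * u h + 2 * ε * u k ≠ 0) :
    HasFDerivAt (kahanCoord ε h k)
      (((1 + ε * u h) * (1 - ε * u h) / (1 - ε * u h + 2 * ε * u k) ^ 2) •
          (proj k : (Fin n → ℝ) →L[ℝ] ℝ)
        + (2 * ε * u k * (1 + ε * u k) / (1 - ε * u h + 2 * ε * u k) ^ 2) • proj h) u := by
  have hk' := hasFDerivAt_apply (𝕜 := ℝ) k u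
  have hh' := hasFDerivAt_apply (𝕜 := ℝ) h u
  have hden := ((hh'.const_mul ε).const_sub 1).add (hk'.const_mul (2 * ε))
  have hquot := (hk'.mul ((hh'.const_mul ε).const_add 1)).mul
    ((hasDerivAt_inv hk).comp_hasFDerivAt u hden)
  refine hquot.congr_fderiv ?_
  ext v
  simp only [Pi.mul_apply, smul_add, smul_neg, neg_smul, neg_neg, Function.comp_apply,
    Pi.add_apply, add_apply, smul_apply, proj_apply, smul_eq_mul, neg_apply]
  field_simp
  ring

theorem kahanCoord_bracket (ε : ℝ) {h i j : Fin n} (hij : i < j) (hjh : j ≤ h)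
    {u : Fin n → ℝ} (hi : 1 - ε * u h + 2 * ε * u i ≠ 0) (hj : 1 - ε * u h + 2 * ε * u j ≠ 0) :
    ubracket (kahanCoord ε h i) (kahanCoord ε h j) u
      = kahanCoord ε h i u * (kahanCoord ε h j u - kahanCoord ε h i u) := by
  rw [ubracket_eq_poissonBivector, (hasFDerivAt_kahanCoord ε h i hi).fderiv,
    (hasFDerivAt_kahanCoord ε h j hj).fderiv]
  simp only [map_add, map_smul, LinearMap.add_apply, LinearMap.smul_apply, smul_eq_mul]
  rw [poissonBivector_swap u (proj j) (proj h)]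
  simp only [poissonBivector_proj_proj_of_le u hij.le,
    poissonBivector_proj_proj_of_le u (hij.le.trans hjh), poissonBivector_proj_proj_of_le u hjh,
    poissonBivector_proj_proj_of_le u le_rfl, kahanCoord]
  linear_combination kahan_bracket_identity ε (u i) (u j) (u h) hi hj

end

/-- the Kahan map `ũ_j = u_j (1+εH)/(1−εH+2εu_j)` (with `H = u_m`, the last
coordinate) is a Poisson map: for `i < j`, `{ũ_i, ũ_j} = ũ_i (ũ_j − ũ_i)`. -/
theorem kahan_is_poisson (m : ℕ) (ε : ℝ) (i j : Fin (m + 1)) (hij : i < j)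
    (u : Fin (m + 1) → ℝ)
    (hden : ∀ k : Fin (m + 1), 1 - ε * u (Fin.last m) + 2 * ε * u k ≠ 0) :
    ubracket
      (fun v => v i * (1 + ε * v (Fin.last m)) / (1 - ε * v (Fin.last m) + 2 * ε * v i))
      (fun v => v j * (1 + ε * v (Fin.last m)) / (1 - ε * v (Fin.last m) + 2 * ε * v j)) u
      = (u i * (1 + ε * u (Fin.last m)) / (1 - ε * u (Fin.last m) + 2 * ε * u i)) *
        ((u j * (1 + ε * u (Fin.last m)) / (1 - ε * u (Fin.last m) + 2 * ε * u j))
          - u i * (1 + ε * u (Fin.last m)) / (1 - ε * u (Fin.last m) + 2 * ε * u i)) :=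
  kahanCoord_bracket ε hij (Fin.le_last j) (hden i) (hden j)
end

section
/- The Jacobian determinant of the Kahan map equals (ỹ_1 ỹ_2 ⋯ ỹ_m)/(y_1 y_2 ⋯ y_m); equivalently, det of the Jacobian of u ↦ ũ, where ũ_j = u_j(1+εH)/(1−εH+2εu_j) and H = u_m, equals (1−ε²H²)^{m−1} / ∏_{j=1}^{m−1} (1−εH+2εu_j)². -/
/-!
Each `ũ_i` depends only on `u_i` and `H = u_m`, so the Jacobian vanishes off the diagonal and the
last column and is upper triangular. Its diagonal entries are `(1 - ε²H²)/(1 - εH + 2εu_i)²`,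
except the last one, which is `1` because `ũ_m = H`.
-/

open Finset

theorem fderiv_kahan_component_apply {ι : Type*} [Fintype ι] (ε : ℝ) (k i : ι) (u w : ι → ℝ)
    (hd : 1 - ε * u k + 2 * ε * u i ≠ 0) :
    fderiv ℝ (fun v : ι → ℝ => v i * (1 + ε * v k) / (1 - ε * v k + 2 * ε * v i)) u w =
      ((1 - ε ^ 2 * u k ^ 2) * w i + 2 * ε * u i * (1 + ε * u i) * w k) /
        (1 - ε * u k + 2 * ε * u i) ^ 2 := by
  have hi := hasFDerivAt_apply (𝕜 := ℝ) i u
  have hk := hasFDerivAt_apply (𝕜 := ℝ) k u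
  have hnum := hi.fun_mul ((hk.const_mul ε).const_add 1)
  have hden := ((hk.const_mul ε).const_sub 1).fun_add (hi.const_mul (2 * ε))
  have h := hnum.fun_mul ((hasFDerivAt_inv hd).comp u hden)
  simp only [div_eq_mul_inv, Function.comp_def] at h ⊢
  rw [h.fderiv]
  simp only [ContinuousLinearMap.comp_add, ContinuousLinearMap.comp_neg,
    ContinuousLinearMap.comp_smulₛₗ, Real.ringHom_apply, smul_add, smul_neg,
    add_apply, neg_apply, smul_apply,
    ContinuousLinearMap.comp_apply, ContinuousLinearMap.proj_apply,
    ContinuousLinearMap.toSpanSingleton_apply, smul_eq_mul]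
  field_simp
  ring

theorem Matrix.det_of_eq_zero_of_ne_of_ne_last {R : Type*} [CommRing R] {m : ℕ}
    (M : Matrix (Fin (m + 1)) (Fin (m + 1)) R)
    (hM : ∀ i j, j ≠ i → j ≠ Fin.last m → M i j = 0) :
    M.det = (∏ i ∈ univ.erase (Fin.last m), M i i) * M (Fin.last m) (Fin.last m) := by
  rw [prod_erase_mul _ _ (mem_univ _)]
  exact Matrix.det_of_isUpperTriangular fun i j hji =>
    hM i j hji.ne (hji.trans_le (Fin.le_last i)).ne

/-- the Jacobian determinant of the Kahan map in the `u`-coordinates,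
`ũ_j = u_j (1+εH)/(1−εH+2εu_j)` with `H = u_m` (the last of the `m+1` coordinates),
equals `(1−ε²H²)^m / ∏_{j<m} (1−εH+2εu_j)²`
(equivalently, the Jacobian of `y ↦ ỹ` equals `(ỹ_1 ⋯ ỹ_m)/(y_1 ⋯ y_m)`). -/
theorem kahan_jacobian (m : ℕ) (ε : ℝ) (u : Fin (m + 1) → ℝ)
    (hden : ∀ k : Fin (m + 1), 1 - ε * u (Fin.last m) + 2 * ε * u k ≠ 0) :
    Matrix.det (Matrix.of fun i j : Fin (m + 1) =>
      fderiv ℝ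
        (fun v => v i * (1 + ε * v (Fin.last m)) / (1 - ε * v (Fin.last m) + 2 * ε * v i)) u
        (Pi.single j 1))
      = (1 - ε ^ 2 * u (Fin.last m) ^ 2) ^ m /
        ∏ j ∈ Finset.univ.filter (fun j => j ≠ Fin.last m),
          (1 - ε * u (Fin.last m) + 2 * ε * u j) ^ 2 := by
  set H := u (Fin.last m)
  set J := Matrix.of fun i j : Fin (m + 1) =>
    fderiv ℝ (fun v => v i * (1 + ε * v (Fin.last m)) / (1 - ε * v (Fin.last m) + 2 * ε * v i)) u
      (Pi.single j 1)
  have hJ (i j) : J i j = ((1 - ε ^ 2 * H ^ 2) * (Pi.single j 1 : Fin (m + 1) → ℝ) i +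
      2 * ε * u i * (1 + ε * u i) * (Pi.single j 1 : Fin (m + 1) → ℝ) (Fin.last m)) /
        (1 - ε * H + 2 * ε * u i) ^ 2 :=
    fderiv_kahan_component_apply ε _ i u _ (hden i)
  have hoff (i j) (hji : j ≠ i) (hjl : j ≠ Fin.last m) : J i j = 0 := by
    simp [hJ, hji.symm, hjl.symm]
  have hdiag : ∀ i ∈ univ.erase (Fin.last m),
      J i i = (1 - ε ^ 2 * H ^ 2) / (1 - ε * H + 2 * ε * u i) ^ 2 := by
    intro i hi
    simp [hJ, (ne_of_mem_erase hi).symm]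
  have hlast : J (Fin.last m) (Fin.last m) = 1 := by
    rw [hJ, Pi.single_eq_same, div_eq_one_iff_eq (pow_ne_zero 2 (hden _))]
    ring
  rw [Matrix.det_of_eq_zero_of_ne_of_ne_last J hoff, prod_congr rfl hdiag, hlast, mul_one,
    prod_div_distrib, prod_const, card_erase_of_mem (mem_univ _), card_univ, Fintype.card_fin,
    Nat.add_sub_cancel, filter_ne']
end
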